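/- Correctness of the generating-function TTSV1 algorithm: for every vector b : V → ℝ and every vertex v ∈ V, [B b^{N−1}]_v = ∑_{e ∈ E, v ∈ e} (w(e)/|β(e)|) · (N−1)! · c_{N−1}(e, v), where c_{N−1}(e, v) is the coefficient of X^{N−1} in the formal power series exp(b(v)·X) · ∏_{u ∈ e∖{v}} (exp(b(u)·X) − 1) over ℝ. -/

import Mathlib

/-- The set of ordered blowups of a finite subset `e` of the vertex set `V`:
all `N`-tuples of vertices whose set of entries is exactly `e`. -/
def blowups (V : Type*) [Fintype V] [DecidableEq V] (N : ℕ) (e : Finset V) :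
    Finset (Fin N → V) :=
  Finset.univ.filter (fun i => ∀ v : V, v ∈ e ↔ ∃ k : Fin N, i k = v)

/-- The Banerjee blowup adjacency tensor of the hypergraph with edge set `E`
and weights `w`. -/
noncomputable def tensorB (V : Type*) [Fintype V] [DecidableEq V] (N : ℕ)
    (E : Finset (Finset V)) (w : Finset V → ℝ) (i : Fin N → V) : ℝ :=
  if Finset.image i Finset.univ ∈ E then
    w (Finset.image i Finset.univ) /
      (blowups V N (Finset.image i Finset.univ)).card
  else 0

/-- The `N`-tuple `(v, j_1, …, j_{N-1})` obtained by prepending `v` to the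
`(N-1)`-tuple `j`. -/
def extend (V : Type*) (N : ℕ) (v : V) (j : Fin (N - 1) → V) : Fin N → V :=
  fun k => if h : (k : ℕ) = 0 then v else j ⟨(k : ℕ) - 1, by have := k.2; omega⟩

/-- TTSV1: `[B b^{N−1}]_v = ∑_{(i_2,…,i_N) ∈ V^{N−1}} B(v, i_2, …, i_N)
⬝ ∏_{k=2}^N b(i_k)`. -/
noncomputable def ttsv1 (V : Type*) [Fintype V] [DecidableEq V] (N : ℕ)
    (E : Finset (Finset V)) (w : Finset V → ℝ) (b : V → ℝ) (v : V) : ℝ :=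
  ∑ j : Fin (N - 1) → V, tensorB V N E w (extend V N v j) * ∏ k, b (j k)


/-!
With `S = e∖{v}`, expanding the product gives the inclusion–exclusion sum
`exp(b_v X) ∏_{u ∈ S} (exp(b_u X) - 1) = ∑_{t ⊆ S} (-1)^|t| exp((b_v + ∑_{u ∈ S∖t} b_u) X)`,
so `m!` times its `X^m` coefficient is `∑_t (-1)^|t| (b_v + ∑_{S∖t} b_u)^m`. Writing each power
as a sum over words `j : Fin m → V` with letters in `{v} ∪ (S∖t)` and summing the signs first,
only the words whose letters together with `v` exhaust `e` survive: these are exactly the tuples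
`(v, j)` blowing up `e`, i.e. the terms of `[B b^{N-1}]_v` coming from `e`.
-/

open Finset PowerSeries
open scoped Nat

namespace PowerSeries

variable {A : Type*} [CommRing A] [Algebra ℚ A]

theorem prod_rescale_exp {ι : Type*} (s : Finset ι) (c : ι → A) :
    ∏ i ∈ s, rescale (c i) (exp A) = rescale (∑ i ∈ s, c i) (exp A) := by
  induction s using Finset.cons_induction with
  | empty => simp
  | cons i s hi ih => rw [prod_cons, sum_cons, ih, exp_mul_exp_eq_exp_add]

theorem factorial_mul_coeff_rescale_exp (c : A) (m : ℕ) :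
    (m ! : A) * coeff m (rescale c (exp A)) = c ^ m := by
  rw [coeff_rescale, coeff_exp, mul_left_comm, ← map_natCast (algebraMap ℚ A), ← map_mul,
    mul_one_div_cancel (by positivity), map_one, mul_one]

theorem rescale_exp_mul_prod_rescale_exp_sub_one {ι : Type*} [DecidableEq ι] (a : A)
    (s : Finset ι) (c : ι → A) :
    rescale a (exp A) * ∏ i ∈ s, (rescale (c i) (exp A) - 1) =
      ∑ t ∈ s.powerset, (-1 : A) ^ #t • rescale (a + ∑ i ∈ s \ t, c i) (exp A) := by
  simp only [prod_sub, prod_const_one, mul_one, prod_rescale_exp, mul_sum,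
    ← exp_mul_exp_eq_exp_add]
  refine sum_congr rfl fun t _ => ?_
  rw [smul_eq_C_mul, map_pow, map_neg, map_one]
  ring

end PowerSeries

theorem Finset.sum_powerset_filter_subset_sdiff_neg_one_pow {α R : Type*} [DecidableEq α]
    [Ring R] (s d : Finset α) :
    ∑ t ∈ s.powerset with d ⊆ s \ t, (-1 : R) ^ #t = if d = s then 1 else 0 := by
  by_cases hds : d ⊆ s
  · have hfilter : {t ∈ s.powerset | d ⊆ s \ t} = (s \ d).powerset := by
      ext t
      simp only [mem_filter, mem_powerset, subset_sdiff, hds, true_and, disjoint_comm]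
    have := congrArg (Int.cast : ℤ → R) (sum_powerset_neg_one_pow_card (x := s \ d))
    push_cast at this
    rw [hfilter, this]
    exact if_congr (sdiff_eq_empty_iff_subset.trans ⟨hds.antisymm, fun h => h.ge⟩) rfl rfl
  · rw [sum_eq_zero fun t ht => absurd ((mem_filter.1 ht).2.trans sdiff_subset) hds,
      if_neg fun h => hds h.le]

theorem Finset.erase_eq_iff_insert_eq {α : Type*} [DecidableEq α] {a : α} {s : Finset α}
    (ha : a ∉ s) (x : Finset α) : x.erase a = s ↔ insert a x = insert a s := by
  constructor
  · rintro rfl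
    ext
    simp only [mem_insert, mem_erase]
    tauto
  · intro h
    rw [← erase_insert_eq_erase, h, erase_insert ha]

theorem alternating_sum_pow_eq_sum_prod_of_insert_image_eq {V R : Type*} [Fintype V]
    [DecidableEq V] [CommRing R] (b : V → R) {v : V} {s : Finset V} (hv : v ∉ s) (m : ℕ) :
    ∑ t ∈ s.powerset, (-1) ^ #t * (b v + ∑ u ∈ s \ t, b u) ^ m =
      ∑ j : Fin m → V with insert v (image j univ) = insert v s, ∏ k, b (j k) := by
  set D : (Fin m → V) → Finset V := fun j => (image j univ).erase v
  have hpow : ∀ t ∈ s.powerset, (b v + ∑ u ∈ s \ t, b u) ^ m =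
      ∑ j, if D j ⊆ s \ t then ∏ k, b (j k) else 0 := by
    intro t _
    rw [← sum_insert fun h => hv (mem_sdiff.1 h).1, sum_pow', ← sum_filter]
    refine sum_congr (by ext j; simp [D, ← subset_insert_iff, image_subset_iff]) fun _ _ => rfl
  calc
    _ = ∑ t ∈ s.powerset, ∑ j, if D j ⊆ s \ t then (-1) ^ #t * ∏ k, b (j k) else 0 := by
      refine sum_congr rfl fun t ht => ?_
      simp_rw [hpow t ht, mul_sum, mul_ite, mul_zero]
    _ = ∑ j, (∑ t ∈ s.powerset with D j ⊆ s \ t, (-1) ^ #t) * ∏ k, b (j k) := by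
      rw [sum_comm]
      simp_rw [sum_filter, sum_mul, ite_mul, zero_mul]
    _ = ∑ j, if D j = s then ∏ k, b (j k) else 0 := by
      simp_rw [sum_powerset_filter_subset_sdiff_neg_one_pow, ite_mul, one_mul, zero_mul]
    _ = _ := by
      rw [sum_filter]
      exact sum_congr rfl fun j _ => if_congr (erase_eq_iff_insert_eq hv _) rfl rfl

theorem factorial_mul_coeff_rescale_exp_mul_prod_rescale_exp_sub_one {V A : Type*} [Fintype V]
    [DecidableEq V] [CommRing A] [Algebra ℚ A] (b : V → A) {v : V} {e : Finset V} (hv : v ∈ e)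
    (m : ℕ) :
    (m ! : A) * coeff m (rescale (b v) (exp A) * ∏ u ∈ e.erase v, (rescale (b u) (exp A) - 1)) =
      ∑ j : Fin m → V with insert v (image j univ) = e, ∏ k, b (j k) := by
  simp_rw [rescale_exp_mul_prod_rescale_exp_sub_one, map_sum, mul_sum, map_smul, smul_eq_mul,
    mul_left_comm _ ((-1 : A) ^ _), factorial_mul_coeff_rescale_exp]
  rw [alternating_sum_pow_eq_sum_prod_of_insert_image_eq b (notMem_erase v e), insert_erase hv]

theorem extend_succ {V : Type*} (n : ℕ) (v : V) (j : Fin n → V) :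
    extend V (n + 1) v j = Fin.cons v j := by
  funext k
  cases k using Fin.cases <;> simp [extend]

theorem image_extend {V : Type*} [DecidableEq V] {N : ℕ} (hN : 1 ≤ N) (v : V)
    (j : Fin (N - 1) → V) : image (extend V N v j) univ = insert v (image j univ) := by
  obtain ⟨n, rfl⟩ := Nat.exists_eq_add_of_le' hN
  rw [extend_succ]
  ext
  simp [Fin.exists_fin_succ, eq_comm]

theorem ttsv1_generating_function_general (V : Type*) [Fintype V] [DecidableEq V]
    (N : ℕ) (hN : 2 ≤ N) (E : Finset (Finset V))
    (w : Finset V → ℝ)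
    (b : V → ℝ) (v : V) :
    ttsv1 V N E w b v =
      ∑ e ∈ E.filter (fun e => v ∈ e),
        (w e / (blowups V N e).card) *
          (((N - 1).factorial : ℝ) *
            PowerSeries.coeff (R := ℝ) (N - 1)
              (PowerSeries.rescale (b v) (PowerSeries.exp ℝ) *
                ∏ u ∈ e.erase v,
                  (PowerSeries.rescale (b u) (PowerSeries.exp ℝ) - 1))) := by
  set g : (Fin (N - 1) → V) → Finset V := fun j => insert v (image j univ)
  set c : Finset V → ℝ := fun e => w e / #(blowups V N e)
  calc ttsv1 V N E w b v = ∑ j with g j ∈ E, c (g j) * ∏ k, b (j k) := by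
        rw [ttsv1, sum_filter]
        refine sum_congr rfl fun j _ => ?_
        rw [tensorB, image_extend (by omega), ite_mul, zero_mul]
    _ = ∑ j with g j ∈ {e ∈ E | v ∈ e}, c (g j) * ∏ k, b (j k) := by
        simp [g]
    _ = ∑ e ∈ E with v ∈ e, ∑ j with g j = e, c (g j) * ∏ k, b (j k) :=
        (sum_fiberwise_eq_sum_filter _ _ _ _).symm
    _ = _ := by
        refine sum_congr rfl fun e he => ?_
        rw [factorial_mul_coeff_rescale_exp_mul_prod_rescale_exp_sub_one b (mem_filter.1 he).2,
          mul_sum]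
        exact sum_congr rfl fun j hj => by rw [show g j = e from (mem_filter.1 hj).2]

/-- Correctness of the generating-function TTSV1 algorithm:
`[B b^{N−1}]_v = ∑_{e ∈ E, v ∈ e} (w(e)/|β(e)|) ⬝ (N−1)! ⬝ c_{N−1}(e, v)`,
where `c_{N−1}(e, v)` is the coefficient of `X^{N−1}` in
`exp(b(v)·X) ⬝ ∏_{u ∈ e∖{v}} (exp(b(u)·X) − 1)`. -/
theorem ttsv1_generating_function (V : Type*) [Fintype V] [DecidableEq V]
    (N : ℕ) (hN : 2 ≤ N) (E : Finset (Finset V))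
    (hE : ∀ e ∈ E, 2 ≤ e.card ∧ e.card ≤ N) (w : Finset V → ℝ)
    (b : V → ℝ) (v : V) :
    ttsv1 V N E w b v =
      ∑ e ∈ E.filter (fun e => v ∈ e),
        (w e / (blowups V N e).card) *
          (((N - 1).factorial : ℝ) *
            PowerSeries.coeff (R := ℝ) (N - 1)
              (PowerSeries.rescale (b v) (PowerSeries.exp ℝ) *
                ∏ u ∈ e.erase v,
                  (PowerSeries.rescale (b u) (PowerSeries.exp ℝ) - 1))) :=
  ttsv1_generating_function_general V N hN E w b v
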